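/- arXiv:2208.06873 — 5 statements merged into one kernel-verified Lean document; each statement's English description precedes it below -/
import Mathlib

section
/- Let s ∈ (0,1) and set d_s = 2^{1−2s}·Γ(1−s)/Γ(s). Then for every y > 0 the function ψ_s is differentiable at y and ψ_s'(y) = −d_s · y^{2s−1} · ψ_{1−s}(y). -/
open MeasureTheory Real Filter Set

/-- The modified Bessel function of the second kind, for `y > 0` given by
`K_s(y) = ∫_0^∞ e^{−y·cosh t}·cosh(s·t) dt`. -/
noncomputable def besselK (s y : ℝ) : ℝ :=
  ∫ t in Set.Ioi (0 : ℝ), Real.exp (-(y * Real.cosh t)) * Real.cosh (s * t)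

/-- `ψ_s(y) = (2^{1−s}/Γ(s))·|y|^s·K_s(|y|)` for `y ≠ 0`, and `ψ_s(0) = 1`. -/
noncomputable def psi (s : ℝ) (y : ℝ) : ℝ :=
  if y = 0 then 1
  else (2 : ℝ) ^ (1 - s) / Real.Gamma s * |y| ^ s * besselK s |y|

/-! For `y > 0`, `ψ_s(y) = 2^{1-s}/Γ(s) · y^s K_s(y)`. Differentiating under the integral sign
gives `K_s' = -(K_{s+1} + K_{s-1})/2`, because `cosh t · cosh (s t)` is the mean of
`cosh ((s ± 1) t)`. Integrating the derivative of `e^{-y cosh t} sinh (s t)`, which vanishes at `0`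
and at `∞`, gives the recurrence `y (K_{s+1} - K_{s-1}) = 2 s K_s`. Together they yield
`(y^s K_s)' = -y^s K_{s-1}`, and `K_{s-1} = K_{1-s}` since `K` is even in its order; the constants
then combine into `d_s y^{2s-1} ψ_{1-s}(y)`. -/

open scoped Topology

noncomputable def besselKIntegrand (s y t : ℝ) : ℝ :=
  exp (-(y * cosh t)) * cosh (s * t)

lemma besselK_eq_integral_besselKIntegrand (s y : ℝ) :
    besselK s y = ∫ t in Ioi 0, besselKIntegrand s y t := rfl

lemma besselKIntegrand_pos (s y t : ℝ) : 0 < besselKIntegrand s y t :=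
  mul_pos (exp_pos _) (cosh_pos _)

lemma continuous_besselKIntegrand (s y : ℝ) : Continuous (besselKIntegrand s y) := by
  unfold besselKIntegrand; fun_prop

lemma Real.cosh_le_exp_abs (x : ℝ) : cosh x ≤ exp |x| := by
  rw [← cosh_abs, cosh_eq]
  linarith [exp_le_exp.mpr (neg_le_self (abs_nonneg x))]

lemma Real.sq_div_four_le_cosh (x : ℝ) : x ^ 2 / 4 ≤ cosh x := by
  rw [← cosh_abs, cosh_eq]
  have := quadratic_le_exp_of_nonneg (abs_nonneg x)
  nlinarith [exp_pos (-|x|), abs_nonneg x, sq_abs x]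

lemma eventually_mul_sub_mul_cosh_le_neg (b : ℝ) {y : ℝ} (hy : 0 < y) :
    ∀ᶠ t in atTop, b * t - y * cosh t ≤ -t := by
  filter_upwards [eventually_ge_atTop (max 0 (4 * (b + 1) / y))] with t ht
  have ht0 : 0 ≤ t := le_of_max_le_left ht
  have hbt : 4 * (b + 1) ≤ y * t := by
    have := le_of_max_le_right ht
    rw [div_le_iff₀ hy] at this
    linarith
  nlinarith [sq_div_four_le_cosh t]

lemma besselKIntegrand_isBigO_exp_neg (s : ℝ) {y : ℝ} (hy : 0 < y) :
    besselKIntegrand s y =O[atTop] fun t => exp (-1 * t) := by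
  refine Asymptotics.IsBigO.of_bound 1 ?_
  filter_upwards [eventually_mul_sub_mul_cosh_le_neg |s| hy, eventually_ge_atTop 0]
    with t hdecay ht
  rw [norm_of_nonneg (besselKIntegrand_pos s y t).le, norm_of_nonneg (exp_pos _).le, one_mul,
    besselKIntegrand]
  calc exp (-(y * cosh t)) * cosh (s * t) ≤ exp (-(y * cosh t)) * exp (|s| * t) := by
        gcongr
        simpa [abs_mul, abs_of_nonneg ht] using cosh_le_exp_abs (s * t)
    _ = exp (|s| * t - y * cosh t) := by rw [← exp_add]; ring_nf
    _ ≤ exp (-1 * t) := exp_le_exp.mpr (by linarith)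

lemma integrableOn_besselKIntegrand (s : ℝ) {y : ℝ} (hy : 0 < y) :
    IntegrableOn (besselKIntegrand s y) (Ioi 0) :=
  integrable_of_isBigO_exp_neg one_pos (continuous_besselKIntegrand s y).continuousOn
    (besselKIntegrand_isBigO_exp_neg s hy)

lemma besselK_neg (s y : ℝ) : besselK (-s) y = besselK s y := by
  simp only [besselK, neg_mul, cosh_neg]

lemma cosh_mul_besselKIntegrand (s y t : ℝ) :
    cosh t * besselKIntegrand s y t =
      (besselKIntegrand (s + 1) y t + besselKIntegrand (s - 1) y t) / 2 := by
  simp only [besselKIntegrand, add_mul, sub_mul, one_mul, cosh_add, cosh_sub]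
  ring

lemma hasDerivAt_exp_neg_mul_cosh_mul_sinh (s y t : ℝ) :
    HasDerivAt (fun t => exp (-(y * cosh t)) * sinh (s * t))
      (s * besselKIntegrand s y t -
        y / 2 * (besselKIntegrand (s + 1) y t - besselKIntegrand (s - 1) y t)) t := by
  have hexp := ((hasDerivAt_cosh t).const_mul y).fun_neg.exp
  have hsinh := ((hasDerivAt_id' t).const_mul s).sinh
  refine (hexp.fun_mul hsinh).congr_deriv ?_
  simp only [besselKIntegrand, add_mul, sub_mul, one_mul, cosh_add, cosh_sub]
  ring

lemma tendsto_exp_neg_mul_cosh_mul_sinh (s : ℝ) {y : ℝ} (hy : 0 < y) :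
    Tendsto (fun t => exp (-(y * cosh t)) * sinh (s * t)) atTop (𝓝 0) := by
  have hsinh : (fun t => exp (-(y * cosh t)) * sinh (s * t)) =O[atTop] besselKIntegrand s y :=
    Asymptotics.IsBigO.of_bound 1 <| Eventually.of_forall fun t => by
      rw [besselKIntegrand, norm_mul, norm_mul, one_mul]
      gcongr
      rw [norm_of_nonneg (cosh_pos _).le, norm_eq_abs, abs_sinh, ← cosh_abs]
      exact (sinh_lt_cosh _).le
  refine (hsinh.trans (besselKIntegrand_isBigO_exp_neg s hy)).trans_tendsto ?_
  simpa using tendsto_exp_neg_atTop_nhds_zero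

lemma besselK_add_one_sub_besselK_sub_one (s : ℝ) {y : ℝ} (hy : 0 < y) :
    y * (besselK (s + 1) y - besselK (s - 1) y) = 2 * s * besselK s y := by
  have hint := fun a => integrableOn_besselKIntegrand a hy
  have hdiff : IntegrableOn (fun t => besselKIntegrand (s + 1) y t - besselKIntegrand (s - 1) y t)
      (Ioi 0) := (hint _).sub (hint _)
  have hibp := integral_Ioi_of_hasDerivAt_of_tendsto'
    (fun t _ => hasDerivAt_exp_neg_mul_cosh_mul_sinh s y t)
    (((hint s).const_mul s).sub (hdiff.const_mul (y / 2)))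
    (tendsto_exp_neg_mul_cosh_mul_sinh s hy)
  rw [integral_sub ((hint s).const_mul s) (hdiff.const_mul _), integral_const_mul,
    integral_const_mul, integral_sub (hint _) (hint _)] at hibp
  simp only [← besselK_eq_integral_besselKIntegrand, mul_zero, sinh_zero, sub_zero] at hibp
  linarith

lemma hasDerivAt_besselKIntegrand_left (s t x : ℝ) :
    HasDerivAt (fun x => besselKIntegrand s x t) (-(cosh t * besselKIntegrand s x t)) x := by
  refine (((hasDerivAt_mul_const (cosh t)).fun_neg.exp).mul_const (cosh (s * t))).congr_deriv ?_
  rw [besselKIntegrand]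
  ring

lemma hasDerivAt_besselK (s : ℝ) {y : ℝ} (hy : 0 < y) :
    HasDerivAt (besselK s) (-(besselK (s + 1) y + besselK (s - 1) y) / 2) y := by
  have hint_half := fun a => integrableOn_besselKIntegrand a (half_pos hy)
  have hbound : ∀ t, ∀ x ∈ Metric.ball y (y / 2),
      ‖-(cosh t * besselKIntegrand s x t)‖ ≤ cosh t * besselKIntegrand s (y / 2) t := by
    intro t x hx
    have hxy : y / 2 ≤ x := by
      rw [Metric.mem_ball, Real.dist_eq, abs_lt] at hx
      linarith
    rw [norm_neg, norm_of_nonneg (mul_pos (cosh_pos t) (besselKIntegrand_pos s x t)).le]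
    unfold besselKIntegrand
    gcongr
  have hbound_int : IntegrableOn (fun t => cosh t * besselKIntegrand s (y / 2) t) (Ioi 0) := by
    simp_rw [cosh_mul_besselKIntegrand]
    exact ((hint_half _).add (hint_half _)).div_const 2
  have key := hasDerivAt_integral_of_dominated_loc_of_deriv_le (μ := volume.restrict (Ioi 0))
    (F := fun x t => besselKIntegrand s x t) (F' := fun x t => -(cosh t * besselKIntegrand s x t))
    (Metric.ball_mem_nhds y (half_pos hy))
    (Eventually.of_forall fun x => (continuous_besselKIntegrand s x).aestronglyMeasurable)
    (integrableOn_besselKIntegrand s hy)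
    ((continuous_cosh.mul (continuous_besselKIntegrand s y)).neg.aestronglyMeasurable)
    (Eventually.of_forall hbound)
    hbound_int
    (Eventually.of_forall fun t x _ => hasDerivAt_besselKIntegrand_left s t x)
  have hint := fun a => integrableOn_besselKIntegrand a hy
  refine HasDerivAt.congr_deriv (f := besselK s) key.2 ?_
  simp_rw [cosh_mul_besselKIntegrand]
  rw [integral_neg, integral_div, integral_add (hint _) (hint _), neg_div]
  rfl

lemma hasDerivAt_rpow_mul_besselK (s : ℝ) {y : ℝ} (hy : 0 < y) :
    HasDerivAt (fun x => x ^ s * besselK s x) (-(y ^ s * besselK (s - 1) y)) y := by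
  refine ((hasDerivAt_rpow_const (Or.inl hy.ne')).mul (hasDerivAt_besselK s hy)).congr_deriv ?_
  have hys : y ^ s = y ^ (s - 1) * y := by
    rw [← rpow_add_one hy.ne']
    ring_nf
  linear_combination (-(y ^ (s - 1)) / 2) * besselK_add_one_sub_besselK_sub_one s hy +
    (-(besselK (s + 1) y - besselK (s - 1) y) / 2) * hys

lemma psi_of_pos (s : ℝ) {y : ℝ} (hy : 0 < y) :
    psi s y = 2 ^ (1 - s) / Gamma s * y ^ s * besselK s y := by
  rw [psi, if_neg hy.ne', abs_of_pos hy]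

lemma hasDerivAt_psi (s : ℝ) {y : ℝ} (hy : 0 < y) :
    HasDerivAt (psi s) (-(2 ^ (1 - s) / Gamma s * y ^ s * besselK (1 - s) y)) y := by
  have hpsi : (fun x => 2 ^ (1 - s) / Gamma s * (x ^ s * besselK s x)) =ᶠ[𝓝 y] psi s := by
    filter_upwards [eventually_gt_nhds hy] with x hx
    rw [psi_of_pos s hx, mul_assoc]
  have h := ((hasDerivAt_rpow_mul_besselK s hy).const_mul (2 ^ (1 - s) / Gamma s))
  rw [← besselK_neg, neg_sub] at h
  exact (h.congr_of_eventuallyEq hpsi.symm).congr_deriv (by ring)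

theorem psi_hasDerivAt_of_lt_one_general (s : ℝ) (hs1 : s < 1)
    (d : ℝ) (hd : d = (2 : ℝ) ^ (1 - 2 * s) * Real.Gamma (1 - s) / Real.Gamma s) :
    ∀ y : ℝ, 0 < y →
      HasDerivAt (psi s) (-(d * y ^ (2 * s - 1) * psi (1 - s) y)) y := by
  intro y hy
  have hΓ : Gamma (1 - s) ≠ 0 := (Gamma_pos_of_pos (sub_pos.mpr hs1)).ne'
  have hy_pow : y ^ (2 * s - 1) * y ^ (1 - s) = y ^ s := by
    rw [← rpow_add hy]
    ring_nf
  have htwo_pow : (2 : ℝ) ^ (1 - 2 * s) * 2 ^ (1 - (1 - s)) = 2 ^ (1 - s) := by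
    rw [← rpow_add two_pos]
    ring_nf
  convert hasDerivAt_psi s hy using 2
  rw [hd, psi_of_pos (1 - s) hy, ← hy_pow, ← htwo_pow]
  field_simp

/-- for `s ∈ (0,1)` and `d_s = 2^{1−2s}·Γ(1−s)/Γ(s)`, for every `y > 0`
`ψ_s` is differentiable at `y` with `ψ_s'(y) = −d_s·y^{2s−1}·ψ_{1−s}(y)`. -/
theorem psi_hasDerivAt_of_lt_one (s : ℝ) (hs0 : 0 < s) (hs1 : s < 1)
    (d : ℝ) (hd : d = (2 : ℝ) ^ (1 - 2 * s) * Real.Gamma (1 - s) / Real.Gamma s) :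
    ∀ y : ℝ, 0 < y →
      HasDerivAt (psi s) (-(d * y ^ (2 * s - 1) * psi (1 - s) y)) y :=
  psi_hasDerivAt_of_lt_one_general s hs1 d hd
end

section
/- Let b ∈ (−1,1) and let ψ : ℝ → ℝ be an even function, differentiable almost everywhere with ψ(y) = ψ(0) + ∫_0^y ψ'(t) dt for all y ∈ ℝ, and suppose A := ∫_ℝ |y|^b·ψ'(y)² dy < ∞. Then for all y₁, y₂ ∈ ℝ, |ψ(y₂) − ψ(y₁)|² ≤ (1/(1−b)) · A · | |y₂|^{1−b} − |y₁|^{1−b} |. -/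
open MeasureTheory Real Filter Set

/-!
By evenness, `ψ y = ψ |y|`, so it suffices to treat `0 ≤ a ≤ c`. There `ψ c - ψ a = ∫_a^c ψ'`,
and Cauchy–Schwarz applied to the splitting `|ψ'| = (t^{b/2} |ψ'|) · t^{-b/2}` gives
`(ψ c - ψ a)² ≤ A · ∫_a^c t^{-b} dt = A (c^{1-b} - a^{1-b}) / (1 - b)`.
Since `b < 1`, the weight `t^{-b}` is integrable at `0`; the same splitting then shows that `ψ'`
is locally integrable on `[0, ∞)`, which is what makes the fundamental theorem of calculus usable.
-/

section WeightedCauchySchwarz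

variable {α : Type*} [MeasurableSpace α] {μ : Measure α}

theorem sq_integral_mul_le_integral_sq_mul_integral_sq {f g : α → ℝ}
    (hf0 : 0 ≤ᵐ[μ] f) (hg0 : 0 ≤ᵐ[μ] g) (hf : MemLp f 2 μ) (hg : MemLp g 2 μ) :
    (∫ x, f x * g x ∂μ) ^ 2 ≤ (∫ x, f x ^ 2 ∂μ) * ∫ x, g x ^ 2 ∂μ := by
  have hconj : (2 : ℝ).HolderConjugate 2 := .two_two
  have h2 : ENNReal.ofReal 2 = 2 := by norm_num
  have hCS := integral_mul_le_Lp_mul_Lq_of_nonneg hconj hf0 hg0 (h2 ▸ hf) (h2 ▸ hg)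
  simp only [rpow_two, ← sqrt_eq_rpow] at hCS
  have hfg0 : 0 ≤ ∫ x, f x * g x ∂μ :=
    integral_nonneg_of_ae (by filter_upwards [hf0, hg0] with x hfx hgx using mul_nonneg hfx hgx)
  calc (∫ x, f x * g x ∂μ) ^ 2
      ≤ (√(∫ x, f x ^ 2 ∂μ) * √(∫ x, g x ^ 2 ∂μ)) ^ 2 := pow_le_pow_left₀ hfg0 hCS 2
    _ = (∫ x, f x ^ 2 ∂μ) * ∫ x, g x ^ 2 ∂μ := by
      rw [mul_pow, sq_sqrt (integral_nonneg fun _ ↦ sq_nonneg _),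
        sq_sqrt (integral_nonneg fun _ ↦ sq_nonneg _)]

variable {w f : α → ℝ}

theorem memLp_two_sqrt_mul_abs (hw0 : 0 ≤ᵐ[μ] w) (hw : AEStronglyMeasurable w μ)
    (hf : AEStronglyMeasurable f μ) (hwf : Integrable (fun x ↦ w x * f x ^ 2) μ) :
    MemLp (fun x ↦ √(w x) * |f x|) 2 μ := by
  refine (memLp_two_iff_integrable_sq (by fun_prop)).2 (hwf.congr ?_)
  filter_upwards [hw0] with x hx
  rw [mul_pow, sq_sqrt hx, sq_abs]

theorem memLp_two_inv_sqrt (hw0 : 0 ≤ᵐ[μ] w) (hw : AEStronglyMeasurable w μ)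
    (hw_inv : Integrable (fun x ↦ (w x)⁻¹) μ) :
    MemLp (fun x ↦ (√(w x))⁻¹) 2 μ := by
  refine (memLp_two_iff_integrable_sq (by fun_prop)).2 (hw_inv.congr ?_)
  filter_upwards [hw0] with x hx
  rw [inv_pow, sq_sqrt hx]

theorem abs_ae_eq_sqrt_mul_abs_mul_inv_sqrt (hw_pos : ∀ᵐ x ∂μ, 0 < w x) :
    (fun x ↦ |f x|) =ᵐ[μ] fun x ↦ √(w x) * |f x| * (√(w x))⁻¹ := by
  filter_upwards [hw_pos] with x hx
  field_simp [(sqrt_pos.2 hx).ne']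

theorem integrable_of_integrable_mul_sq_of_integrable_inv
    (hw_pos : ∀ᵐ x ∂μ, 0 < w x) (hw : AEStronglyMeasurable w μ)
    (hf : AEStronglyMeasurable f μ) (hwf : Integrable (fun x ↦ w x * f x ^ 2) μ)
    (hw_inv : Integrable (fun x ↦ (w x)⁻¹) μ) : Integrable f μ := by
  have hw0 : 0 ≤ᵐ[μ] w := by filter_upwards [hw_pos] with x hx using hx.le
  have hprod := (memLp_two_sqrt_mul_abs hw0 hw hf hwf).integrable_mul
    (memLp_two_inv_sqrt hw0 hw hw_inv)
  exact (integrable_norm_iff hf).1 (hprod.congr (abs_ae_eq_sqrt_mul_abs_mul_inv_sqrt hw_pos).symm)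

theorem sq_integral_abs_le_integral_mul_sq_mul_integral_inv
    (hw_pos : ∀ᵐ x ∂μ, 0 < w x) (hw : AEStronglyMeasurable w μ)
    (hf : AEStronglyMeasurable f μ) (hwf : Integrable (fun x ↦ w x * f x ^ 2) μ)
    (hw_inv : Integrable (fun x ↦ (w x)⁻¹) μ) :
    (∫ x, |f x| ∂μ) ^ 2 ≤ (∫ x, w x * f x ^ 2 ∂μ) * ∫ x, (w x)⁻¹ ∂μ := by
  have hw0 : 0 ≤ᵐ[μ] w := by filter_upwards [hw_pos] with x hx using hx.le
  have hCS := sq_integral_mul_le_integral_sq_mul_integral_sq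
    (Eventually.of_forall fun x ↦ mul_nonneg (sqrt_nonneg (w x)) (abs_nonneg (f x)))
    (Eventually.of_forall fun x ↦ inv_nonneg.2 (sqrt_nonneg (w x)))
    (memLp_two_sqrt_mul_abs hw0 hw hf hwf) (memLp_two_inv_sqrt hw0 hw hw_inv)
  rw [integral_congr_ae (abs_ae_eq_sqrt_mul_abs_mul_inv_sqrt hw_pos)]
  convert hCS using 2 <;> refine integral_congr_ae ?_ <;> filter_upwards [hw0] with x hx
  · rw [mul_pow, sq_sqrt hx, sq_abs]
  · rw [inv_pow, sq_sqrt hx]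

end WeightedCauchySchwarz

section PowerWeight

variable {a b c : ℝ}

theorem inv_abs_rpow_of_nonneg {t : ℝ} (ht : 0 ≤ t) : (|t| ^ b)⁻¹ = t ^ (-b) := by
  rw [abs_of_nonneg ht, rpow_neg ht]

theorem integrableOn_inv_abs_rpow_Ioc (hb : b < 1) (ha : 0 ≤ a) :
    IntegrableOn (fun t : ℝ ↦ (|t| ^ b)⁻¹) (Ioc a c) := by
  refine ((intervalIntegral.intervalIntegrable_rpow' (a := a) (b := c)
    (by linarith : -1 < -b)).1).congr_fun
    (fun t ht ↦ (inv_abs_rpow_of_nonneg (ha.trans ht.1.le)).symm) measurableSet_Ioc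

theorem setIntegral_inv_abs_rpow_Ioc (hb : b < 1) (ha : 0 ≤ a) (hac : a ≤ c) :
    ∫ t in Ioc a c, (|t| ^ b)⁻¹ = (c ^ (1 - b) - a ^ (1 - b)) / (1 - b) := by
  rw [setIntegral_congr_fun measurableSet_Ioc (g := fun t ↦ t ^ (-b))
    fun t ht ↦ inv_abs_rpow_of_nonneg (ha.trans ht.1.le),
    ← intervalIntegral.integral_of_le hac, integral_rpow (Or.inl (by linarith))]
  ring_nf

theorem ae_restrict_Ioc_abs_rpow_pos (ha : 0 ≤ a) :
    ∀ᵐ t ∂volume.restrict (Ioc a c), 0 < |t| ^ b := by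
  filter_upwards [ae_restrict_mem measurableSet_Ioc] with t ht
  exact rpow_pos_of_pos (abs_pos.2 (ha.trans_lt ht.1).ne') b

variable {f : ℝ → ℝ}

theorem integrableOn_Ioc_of_integrable_abs_rpow_mul_sq (hb : b < 1) (ha : 0 ≤ a)
    (hf : AEStronglyMeasurable f) (hE : Integrable (fun t ↦ |t| ^ b * f t ^ 2)) :
    IntegrableOn f (Ioc a c) :=
  integrable_of_integrable_mul_sq_of_integrable_inv (ae_restrict_Ioc_abs_rpow_pos ha)
    (continuous_abs.measurable.pow_const b).aestronglyMeasurable hf.restrict hE.integrableOn (integrableOn_inv_abs_rpow_Ioc hb ha)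

theorem sq_setIntegral_abs_Ioc_le (hb : b < 1) (ha : 0 ≤ a) (hac : a ≤ c)
    (hf : AEStronglyMeasurable f) (hE : Integrable (fun t ↦ |t| ^ b * f t ^ 2)) :
    (∫ t in Ioc a c, |f t|) ^ 2
      ≤ (∫ t, |t| ^ b * f t ^ 2) * ((c ^ (1 - b) - a ^ (1 - b)) / (1 - b)) := by
  have hCS := sq_integral_abs_le_integral_mul_sq_mul_integral_inv
    (ae_restrict_Ioc_abs_rpow_pos (c := c) ha)
    (continuous_abs.measurable.pow_const b).aestronglyMeasurable hf.restrict hE.integrableOn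
    (integrableOn_inv_abs_rpow_Ioc hb ha)
  rw [setIntegral_inv_abs_rpow_Ioc hb ha hac] at hCS
  refine hCS.trans (mul_le_mul_of_nonneg_right (setIntegral_le_integral hE ?_) ?_)
  · exact .of_forall fun t ↦ mul_nonneg (rpow_nonneg (abs_nonneg t) b) (sq_nonneg (f t))
  · exact div_nonneg (sub_nonneg.2 (rpow_le_rpow ha hac (by linarith))) (by linarith)

end PowerWeight

theorem sq_sub_le_of_integrable_abs_rpow_mul_sq {F f : ℝ → ℝ} {a b c : ℝ} (hb : b < 1)
    (ha : 0 ≤ a) (hac : a ≤ c) (hF : ∀ y, F y = F 0 + ∫ t in (0 : ℝ)..y, f t)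
    (hf : AEStronglyMeasurable f) (hE : Integrable (fun t ↦ |t| ^ b * f t ^ 2)) :
    (F c - F a) ^ 2
      ≤ (∫ t, |t| ^ b * f t ^ 2) * ((c ^ (1 - b) - a ^ (1 - b)) / (1 - b)) := by
  have hf_int (y : ℝ) (hy : 0 ≤ y) : IntervalIntegrable f volume 0 y :=
    (intervalIntegrable_iff_integrableOn_Ioc_of_le hy).2
      (integrableOn_Ioc_of_integrable_abs_rpow_mul_sq hb le_rfl hf hE)
  have hFTC : F c - F a = ∫ t in a..c, f t := by
    rw [hF c, hF a, ← intervalIntegral.integral_interval_sub_left (hf_int c (ha.trans hac))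
      (hf_int a ha)]
    ring
  have habs : |F c - F a| ≤ ∫ t in Ioc a c, |f t| := by
    rw [hFTC, ← intervalIntegral.integral_of_le hac]
    exact intervalIntegral.abs_integral_le_integral_abs hac
  calc (F c - F a) ^ 2 = |F c - F a| ^ 2 := (sq_abs _).symm
    _ ≤ (∫ t in Ioc a c, |f t|) ^ 2 := pow_le_pow_left₀ (abs_nonneg _) habs 2
    _ ≤ _ := sq_setIntegral_abs_Ioc_le hb ha hac hf hE

theorem holder_from_weighted_energy_even_general (b : ℝ) (hb1 : b < 1)
    (ψ : ℝ → ℝ)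
    (hψσ : ∀ y : ℝ, ψ (-y) = ψ y)
    (hψftc : ∀ y : ℝ, ψ y = ψ 0 + ∫ t in (0 : ℝ)..y, deriv ψ t)
    (hψint : Integrable (fun y : ℝ => |y| ^ b * (deriv ψ y) ^ 2)) :
    ∀ y₁ y₂ : ℝ,
      |ψ y₂ - ψ y₁| ^ 2
        ≤ 1 / (1 - b) * (∫ y : ℝ, |y| ^ b * (deriv ψ y) ^ 2)
            * abs (|y₂| ^ (1 - b) - |y₁| ^ (1 - b)) := by
  have hψ_abs (y : ℝ) : ψ |y| = ψ y := by
    rcases abs_choice y with h | h <;> rw [h]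
    exact hψσ y
  intro y₁ y₂
  wlog h : |y₁| ≤ |y₂| generalizing y₁ y₂
  · rw [abs_sub_comm (ψ y₂), abs_sub_comm (|y₂| ^ _)]
    exact this y₂ y₁ (le_of_not_ge h)
  have key := sq_sub_le_of_integrable_abs_rpow_mul_sq hb1 (abs_nonneg y₁) h hψftc
    (measurable_deriv ψ).aestronglyMeasurable hψint
  rw [hψ_abs, hψ_abs] at key
  rw [sq_abs, abs_of_nonneg (sub_nonneg.2 (rpow_le_rpow (abs_nonneg y₁) h (by linarith)))]
  exact key.trans_eq (by ring)

/-- for `b ∈ (−1,1)` and an even absolutely continuous `ψ` with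
`A = ∫ |y|^b·ψ'(y)² dy < ∞`, one has
`|ψ(y₂) − ψ(y₁)|² ≤ (1/(1−b))·A·| |y₂|^{1−b} − |y₁|^{1−b} |`. -/
theorem holder_from_weighted_energy_even (b : ℝ) (hb0 : -1 < b) (hb1 : b < 1)
    (ψ : ℝ → ℝ)
    (hψσ : ∀ y : ℝ, ψ (-y) = ψ y)
    (hψd : ∀ᵐ y : ℝ ∂volume, DifferentiableAt ℝ ψ y)
    (hψftc : ∀ y : ℝ, ψ y = ψ 0 + ∫ t in (0 : ℝ)..y, deriv ψ t)
    (hψint : Integrable (fun y : ℝ => |y| ^ b * (deriv ψ y) ^ 2)) :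
    ∀ y₁ y₂ : ℝ,
      |ψ y₂ - ψ y₁| ^ 2
        ≤ 1 / (1 - b) * (∫ y : ℝ, |y| ^ b * (deriv ψ y) ^ 2)
            * abs (|y₂| ^ (1 - b) - |y₁| ^ (1 - b)) :=
  holder_from_weighted_energy_even_general b hb1 ψ hψσ hψftc hψint
end

section
/- Let b ∈ (−1,1). Let ψ : ℝ → ℝ be even, differentiable almost everywhere with ψ(y) = ψ(0) + ∫_0^y ψ'(t) dt for all y, with ∫_ℝ |y|^b·(ψ(y)² + ψ'(y)²) dy < ∞. Suppose moreover that the function y ↦ |y|^b·ψ'(y) coincides almost everywhere with a function F that is absolutely continuous on ℝ (F(y₂) − F(y₁) = ∫_{y₁}^{y₂} F'(t) dt for all y₁, y₂), and that the function g defined by g(y) = −|y|^{−b}·F'(y) satisfies ∫_ℝ |y|^b·g(y)² dy < ∞. Then for every even function η : ℝ → ℝ which is differentiable almost everywhere with η(y) = η(0) + ∫_0^y η'(t) dt and ∫_ℝ |y|^b·(η(y)² + η'(y)²) dy < ∞, one has ∫_ℝ |y|^b·g(y)·η(y) dy = ∫_ℝ |y|^b·ψ'(y)·η'(y) dy. 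-/
/-!
Write `w y = |y| ^ b`. The weighted bounds make `w ψ' η`, `w g η` and `w ψ' η'` integrable by
AM-GM, and, since both `w` and `w⁻¹` are locally integrable for `|b| < 1`, they also make `η'`
and `F' = -w g` locally integrable, so that `F` and `η` are absolutely continuous on every
interval. Integrating `(F η)' = F' η + F η'` over `[a, b]` and letting `a → -∞`, `b → ∞`, the
boundary terms vanish because `F η = w ψ' η` is integrable, so `∫ F' η = -∫ F η'`.
-/

open MeasureTheory Real Filter Set Topology

lemma integrable_mul_mul_of_integrable_mul_sq {α : Type*} [MeasurableSpace α] {μ : Measure α}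
    {w f h : α → ℝ} (hw : ∀ x, 0 ≤ w x) (hwm : AEStronglyMeasurable w μ)
    (hfm : AEStronglyMeasurable f μ) (hhm : AEStronglyMeasurable h μ)
    (hf : Integrable (fun x => w x * f x ^ 2) μ) (hh : Integrable (fun x => w x * h x ^ 2) μ) :
    Integrable (fun x => w x * f x * h x) μ := by
  refine ((hf.add hh).div_const 2).mono' ((hwm.mul hfm).mul hhm) (ae_of_all _ fun x => ?_)
  rw [Real.norm_eq_abs, abs_le, Pi.add_apply]
  constructor <;> nlinarith [mul_nonneg (hw x) (sq_nonneg (f x - h x)),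
    mul_nonneg (hw x) (sq_nonneg (f x + h x))]

lemma MeasureTheory.Integrable.mul_sq_of_mul_add_sq {α : Type*} [MeasurableSpace α]
    {μ : Measure α} {w f h : α → ℝ} (hw : ∀ x, 0 ≤ w x) (hwm : AEStronglyMeasurable w μ)
    (hhm : AEStronglyMeasurable h μ) (H : Integrable (fun x => w x * (f x ^ 2 + h x ^ 2)) μ) :
    Integrable (fun x => w x * h x ^ 2) μ := by
  refine H.mono' (hwm.mul (hhm.pow 2)) (ae_of_all _ fun x => ?_)
  rw [Real.norm_eq_abs, abs_of_nonneg (mul_nonneg (hw x) (sq_nonneg _))]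
  exact mul_le_mul_of_nonneg_left (le_add_of_nonneg_left (sq_nonneg _)) (hw x)

lemma measurable_abs_rpow (p : ℝ) : Measurable fun y : ℝ => |y| ^ p := by fun_prop

lemma intervalIntegrable_abs_rpow {p : ℝ} (hp : -1 < p) (a c : ℝ) :
    IntervalIntegrable (fun y : ℝ => |y| ^ p) volume a c := by
  have h_nonneg : ∀ c : ℝ, 0 ≤ c → IntervalIntegrable (fun y : ℝ => |y| ^ p) volume 0 c := by
    intro c hc
    refine (intervalIntegral.intervalIntegrable_rpow' hp).congr ?_
    rw [uIoc_of_le hc]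
    exact fun y hy => by simp only [abs_of_pos hy.1]
  have h_zero : ∀ c : ℝ, IntervalIntegrable (fun y : ℝ => |y| ^ p) volume 0 c := by
    intro c
    rcases le_total 0 c with hc | hc
    · exact h_nonneg c hc
    · simpa using (IntervalIntegrable.iff_comp_neg (by simp)).1 (h_nonneg (-c) (by linarith))
  exact (h_zero a).symm.trans (h_zero c)

theorem absolutelyContinuousOnInterval_of_forall_integral_eq_sub {f f' : ℝ → ℝ} {a b : ℝ}
    (hf' : IntervalIntegrable f' volume a b) (hf : ∀ x, ∫ t in a..x, f' t = f x - f a) :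
    AbsolutelyContinuousOnInterval f a b := by
  have hf_eq : f = fun x => (∫ t in a..x, f' t) + f a := funext fun x => by rw [hf]; ring
  rw [hf_eq]
  exact (hf'.absolutelyContinuousOnInterval_intervalIntegral left_mem_uIcc).fun_add
    (LipschitzWith.const (f a)).lipschitzOnWith.absolutelyContinuousOnInterval

lemma continuous_of_forall_absolutelyContinuousOnInterval {f : ℝ → ℝ}
    (hf : ∀ a b, AbsolutelyContinuousOnInterval f a b) : Continuous f :=
  continuous_iff_continuousAt.2 fun x => (hf (x - 1) (x + 1)).continuousOn.continuousAt <| by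
    rw [uIcc_of_le (by linarith)]
    exact Icc_mem_nhds (by linarith) (by linarith)

section Weight

variable {b : ℝ}

lemma IntervalIntegrable.of_integrable_abs_rpow_mul_sq (hb : b < 1) {f : ℝ → ℝ}
    (hfm : AEStronglyMeasurable f) (hf : Integrable (fun y => |y| ^ b * f y ^ 2)) (a c : ℝ) :
    IntervalIntegrable f volume a c := by
  rw [intervalIntegrable_iff]
  have hinv : IntegrableOn (fun y => |y| ^ b * (|y| ^ (-b)) ^ 2) (uIoc a c) := by
    refine (intervalIntegrable_iff.1 (intervalIntegrable_abs_rpow (p := -b) (by linarith) a c)).congr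
      (ae_restrict_of_ae ?_)
    filter_upwards [volume.ae_ne 0] with y hy
    rw [← rpow_natCast, ← rpow_mul (abs_nonneg y), ← rpow_add (abs_pos.2 hy)]
    ring_nf
  refine (integrable_mul_mul_of_integrable_mul_sq (fun y => rpow_nonneg (abs_nonneg y) b)
    (measurable_abs_rpow b).aestronglyMeasurable hfm.restrict
    (measurable_abs_rpow (-b)).aestronglyMeasurable hf.integrableOn hinv).congr
    (ae_restrict_of_ae ?_)
  filter_upwards [volume.ae_ne 0] with y hy
  rw [mul_right_comm, ← rpow_add (abs_pos.2 hy), add_neg_cancel, rpow_zero, one_mul]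

lemma IntervalIntegrable.abs_rpow_mul_of_integrable_mul_sq (hb : -1 < b) {g : ℝ → ℝ}
    (hgm : AEStronglyMeasurable g) (hg : Integrable (fun y => |y| ^ b * g y ^ 2)) (a c : ℝ) :
    IntervalIntegrable (fun y => |y| ^ b * g y) volume a c := by
  rw [intervalIntegrable_iff]
  simpa [IntegrableOn] using integrable_mul_mul_of_integrable_mul_sq
    (fun y => rpow_nonneg (abs_nonneg y) b) (measurable_abs_rpow b).aestronglyMeasurable
    hgm.restrict aestronglyMeasurable_const hg.integrableOn (h := fun _ => (1 : ℝ))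
    (by simpa [IntegrableOn] using intervalIntegrable_iff.1 (intervalIntegrable_abs_rpow hb a c))

lemma absolutelyContinuousOnInterval_of_integrable_abs_rpow_mul_deriv_sq (hb : b < 1)
    {f : ℝ → ℝ} (hf : ∀ y, f y = f 0 + ∫ t in (0 : ℝ)..y, deriv f t)
    (hf' : Integrable (fun y => |y| ^ b * deriv f y ^ 2)) (a c : ℝ) :
    AbsolutelyContinuousOnInterval f a c := by
  have hloc := IntervalIntegrable.of_integrable_abs_rpow_mul_sq hb
    (measurable_deriv f).aestronglyMeasurable hf'
  refine absolutelyContinuousOnInterval_of_forall_integral_eq_sub (hloc a c) fun x => ?_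
  rw [hf x, hf a, ← intervalIntegral.integral_interval_sub_left (hloc 0 x) (hloc 0 a)]
  ring

lemma absolutelyContinuousOnInterval_of_deriv_ae_eq_abs_rpow_mul (hb : -1 < b) {F g : ℝ → ℝ}
    (hF : ∀ x y, F y - F x = ∫ t in x..y, deriv F t)
    (hF' : deriv F =ᵐ[volume] fun y => -(|y| ^ b * g y)) (hgm : AEStronglyMeasurable g)
    (hg : Integrable (fun y => |y| ^ b * g y ^ 2)) (a c : ℝ) :
    AbsolutelyContinuousOnInterval F a c :=
  absolutelyContinuousOnInterval_of_forall_integral_eq_sub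
    ((IntervalIntegrable.abs_rpow_mul_of_integrable_mul_sq hb hgm hg a c).neg.congr_ae
      (ae_restrict_of_ae hF'.symm)) fun x => (hF a x).symm

end Weight

lemma volume_eq_top_of_mem_atTop {s : Set ℝ} (hs : s ∈ atTop) : volume s = ⊤ := by
  obtain ⟨a, ha⟩ := mem_atTop_sets.1 hs
  exact top_le_iff.1 (volume_Ici (a := a) ▸ measure_mono ha)

lemma volume_eq_top_of_mem_atBot {s : Set ℝ} (hs : s ∈ atBot) : volume s = ⊤ := by
  obtain ⟨a, ha⟩ := mem_atBot_sets.1 hs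
  exact top_le_iff.1 (volume_Iic (a := a) ▸ measure_mono ha)

theorem integral_eq_zero_of_forall_intervalIntegral_eq_sub {E : Type*} [NormedAddCommGroup E]
    [NormedSpace ℝ E] {f f' : ℝ → E} (hf : Integrable f) (hf' : Integrable f')
    (h : ∀ a b, ∫ x in a..b, f' x = f b - f a) : ∫ x, f' x = 0 := by
  have htop : Tendsto f atTop (𝓝 (f 0 + ∫ x in Ioi 0, f' x)) :=
    (tendsto_const_nhds.add (intervalIntegral_tendsto_integral_Ioi 0 hf'.integrableOn
      tendsto_id)).congr fun t => by simp [h]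
  have hbot : Tendsto f atBot (𝓝 (f 0 - ∫ x in Iic 0, f' x)) :=
    (tendsto_const_nhds.sub (intervalIntegral_tendsto_integral_Iic 0 hf'.integrableOn
      tendsto_id)).congr fun t => by simp [h]
  have h_top := (hf.integrableAtFilter atTop).eq_zero_of_tendsto
    (fun _ => volume_eq_top_of_mem_atTop) htop
  have h_bot := (hf.integrableAtFilter atBot).eq_zero_of_tendsto
    (fun _ => volume_eq_top_of_mem_atBot) hbot
  calc ∫ x, f' x = (∫ x in Iic 0, f' x) + ∫ x in Ioi 0, f' x :=
        (intervalIntegral.integral_Iic_add_Ioi hf'.integrableOn hf'.integrableOn).symm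
    _ = (f 0 + ∫ x in Ioi 0, f' x) - (f 0 - ∫ x in Iic 0, f' x) := by abel
    _ = 0 := by rw [h_top, h_bot, sub_zero]

theorem integral_deriv_mul_eq_neg_integral_mul_deriv {u v : ℝ → ℝ}
    (hu : ∀ a b, AbsolutelyContinuousOnInterval u a b)
    (hv : ∀ a b, AbsolutelyContinuousOnInterval v a b) (huv : Integrable (fun x => u x * v x))
    (hu'v : Integrable (fun x => deriv u x * v x)) (huv' : Integrable (fun x => u x * deriv v x)) :
    ∫ x, deriv u x * v x = -∫ x, u x * deriv v x := by
  have := integral_eq_zero_of_forall_intervalIntegral_eq_sub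
    (f' := fun x => deriv u x * v x + u x * deriv v x) huv (hu'v.add huv')
    fun a b => (hu a b).integral_deriv_mul_eq_sub (hv a b)
  rw [integral_add hu'v huv'] at this
  exact eq_neg_of_add_eq_zero_left this

theorem integral_weight_mul_mul_eq_integral_weight_mul_mul_deriv {w ψ' g F η : ℝ → ℝ}
    (hw : ∀ y, 0 ≤ w y) (hwm : AEStronglyMeasurable w) (hψ'm : AEStronglyMeasurable ψ')
    (hgm : AEStronglyMeasurable g) (hFac : ∀ a c, AbsolutelyContinuousOnInterval F a c)
    (hηac : ∀ a c, AbsolutelyContinuousOnInterval η a c) (hF : ∀ᵐ y, w y * ψ' y = F y)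
    (hF' : deriv F =ᵐ[volume] fun y => -(w y * g y)) (hψ' : Integrable (fun y => w y * ψ' y ^ 2))
    (hg : Integrable (fun y => w y * g y ^ 2))
    (hηE : Integrable (fun y => w y * (η y ^ 2 + deriv η y ^ 2))) :
    ∫ y, w y * g y * η y = ∫ y, w y * ψ' y * deriv η y := by
  have hηm := (continuous_of_forall_absolutelyContinuousOnInterval hηac).aestronglyMeasurable
    (μ := volume)
  have hη'm := (measurable_deriv η).aestronglyMeasurable (μ := volume)
  have hη := Integrable.mul_sq_of_mul_add_sq (f := deriv η) hw hwm hηm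
    (hηE.congr (ae_of_all _ fun y => by simp only [add_comm]))
  have hη' := hηE.mul_sq_of_mul_add_sq hw hwm hη'm
  have hFη : Integrable (fun y => F y * η y) :=
    (integrable_mul_mul_of_integrable_mul_sq hw hwm hψ'm hηm hψ' hη).congr
      (hF.mono fun y hy => by simp only [← hy])
  have hF'η : Integrable (fun y => deriv F y * η y) :=
    (integrable_mul_mul_of_integrable_mul_sq hw hwm hgm hηm hg hη).neg.congr
      (hF'.mono fun y hy => by simp only [Pi.neg_apply, hy]; ring)
  have hFη' : Integrable (fun y => F y * deriv η y) :=
    (integrable_mul_mul_of_integrable_mul_sq hw hwm hψ'm hη'm hψ' hη').congr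
      (hF.mono fun y hy => by simp only [← hy])
  calc ∫ y, w y * g y * η y = ∫ y, -(deriv F y * η y) :=
        integral_congr_ae (hF'.mono fun y hy => by simp only [hy]; ring)
    _ = ∫ y, F y * deriv η y := by
        rw [integral_neg, integral_deriv_mul_eq_neg_integral_mul_deriv hFac hηac hFη hF'η hFη',
          neg_neg]
    _ = ∫ y, w y * ψ' y * deriv η y := integral_congr_ae (hF.mono fun y hy => by simp only [← hy])

theorem weighted_integration_by_parts_general (b : ℝ) (hb0 : -1 < b) (hb1 : b < 1)
    (ψ F g : ℝ → ℝ)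
    (hψint : Integrable (fun y : ℝ => |y| ^ b * ((ψ y) ^ 2 + (deriv ψ y) ^ 2)))
    (hF : ∀ᵐ y : ℝ ∂volume, |y| ^ b * deriv ψ y = F y)
    (hFftc : ∀ y₁ y₂ : ℝ, F y₂ - F y₁ = ∫ t in y₁..y₂, deriv F t)
    (hg : ∀ y : ℝ, g y = -(|y| ^ (-b) * deriv F y))
    (hgint : Integrable (fun y : ℝ => |y| ^ b * (g y) ^ 2)) :
    ∀ η : ℝ → ℝ,
      (∀ y : ℝ, η (-y) = η y) →
      (∀ᵐ y : ℝ ∂volume, DifferentiableAt ℝ η y) →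
      (∀ y : ℝ, η y = η 0 + ∫ t in (0 : ℝ)..y, deriv η t) →
      Integrable (fun y : ℝ => |y| ^ b * ((η y) ^ 2 + (deriv η y) ^ 2)) →
      ∫ y : ℝ, |y| ^ b * g y * η y = ∫ y : ℝ, |y| ^ b * deriv ψ y * deriv η y := by
  intro η _ _ hηftc hηint
  have hw : ∀ y : ℝ, 0 ≤ |y| ^ b := fun y => rpow_nonneg (abs_nonneg y) b
  have hwm := (measurable_abs_rpow b).aestronglyMeasurable (μ := volume)
  have hψ'm := (measurable_deriv ψ).aestronglyMeasurable (μ := volume)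
  have hgm : AEStronglyMeasurable g := by
    rw [funext hg]
    exact ((measurable_abs_rpow (-b)).mul (measurable_deriv F)).neg.aestronglyMeasurable
  have hF' : deriv F =ᵐ[volume] fun y => -(|y| ^ b * g y) := by
    filter_upwards [volume.ae_ne 0] with y hy
    rw [hg, rpow_neg (abs_nonneg y), mul_neg,
      mul_inv_cancel_left₀ (rpow_pos_of_pos (abs_pos.2 hy) b).ne', neg_neg]
  have hηac := absolutelyContinuousOnInterval_of_integrable_abs_rpow_mul_deriv_sq hb1 hηftc
    (hηint.mul_sq_of_mul_add_sq hw hwm (measurable_deriv η).aestronglyMeasurable)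
  have hFac := absolutelyContinuousOnInterval_of_deriv_ae_eq_abs_rpow_mul hb0 hFftc hF' hgm hgint
  exact integral_weight_mul_mul_eq_integral_weight_mul_mul_deriv hw hwm hψ'm hgm hFac hηac hF hF'
    (hψint.mul_sq_of_mul_add_sq hw hwm hψ'm) hgint hηint

/-- integration by parts for the weak weighted operator
`D_b ψ = −|y|^{−b}·(|y|^b·ψ')'`. If `ψ` is even, absolutely continuous, with finite
weighted energy, if `|y|^b·ψ'` agrees a.e. with an absolutely continuous `F`, and if
`g(y) = −|y|^{−b}·F'(y)` has `∫ |y|^b·g² < ∞`, then for every even admissible `η`,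
`∫ |y|^b·g·η = ∫ |y|^b·ψ'·η'`. -/
theorem weighted_integration_by_parts (b : ℝ) (hb0 : -1 < b) (hb1 : b < 1)
    (ψ F g : ℝ → ℝ)
    (hψσ : ∀ y : ℝ, ψ (-y) = ψ y)
    (hψd : ∀ᵐ y : ℝ ∂volume, DifferentiableAt ℝ ψ y)
    (hψftc : ∀ y : ℝ, ψ y = ψ 0 + ∫ t in (0 : ℝ)..y, deriv ψ t)
    (hψint : Integrable (fun y : ℝ => |y| ^ b * ((ψ y) ^ 2 + (deriv ψ y) ^ 2)))
    (hF : ∀ᵐ y : ℝ ∂volume, |y| ^ b * deriv ψ y = F y)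
    (hFd : ∀ᵐ y : ℝ ∂volume, DifferentiableAt ℝ F y)
    (hFftc : ∀ y₁ y₂ : ℝ, F y₂ - F y₁ = ∫ t in y₁..y₂, deriv F t)
    (hg : ∀ y : ℝ, g y = -(|y| ^ (-b) * deriv F y))
    (hgint : Integrable (fun y : ℝ => |y| ^ b * (g y) ^ 2)) :
    ∀ η : ℝ → ℝ,
      (∀ y : ℝ, η (-y) = η y) →
      (∀ᵐ y : ℝ ∂volume, DifferentiableAt ℝ η y) →
      (∀ y : ℝ, η y = η 0 + ∫ t in (0 : ℝ)..y, deriv η t) →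
      Integrable (fun y : ℝ => |y| ^ b * ((η y) ^ 2 + (deriv η y) ^ 2)) →
      ∫ y : ℝ, |y| ^ b * g y * η y = ∫ y : ℝ, |y| ^ b * deriv ψ y * deriv η y :=
  weighted_integration_by_parts_general b hb0 hb1 ψ F g hψint hF hFftc hg hgint
end

section
/- Let s be a real number and m a positive integer with s > m. Then (1/B(s,1/2)) · Σ_{ℓ=0}^{m} C(m,ℓ)·(−1)^ℓ·B(s−ℓ, 1/2) = (−1)^m · (Γ(s−m)/Γ(s)) · (2m)!/(2^{2m}·m!), where B(x,y) = Γ(x)·Γ(y)/Γ(x+y) is the Beta function and C(m,ℓ) is the binomial coefficient. -/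
/-!
Up to the sign `(-1)^m`, the alternating binomial sum is the `m`-th difference of
`x ↦ B(x, 1/2)` with step `-1`. The Pascal-type rule `B(x-1, y) - B(x, y) = B(x-1, y+1)` shows
that each difference step lowers the first argument and raises the second by one, so the `m`-th difference is
`B(s-m, 1/2+m)`. Dividing by `B(s, 1/2)` cancels `Γ(s+1/2)` and leaves
`Γ(s-m)/Γ(s) · Γ(m+1/2)/Γ(1/2)`, and Legendre's duplication formula gives
`Γ(m+1/2)/Γ(1/2) = (2m)!/(2^{2m} m!)`.
-/

open Real

/-- The Beta function `B(x,y) = Γ(x)·Γ(y)/Γ(x+y)`. -/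
noncomputable def betaFn (x y : ℝ) : ℝ :=
  Real.Gamma x * Real.Gamma y / Real.Gamma (x + y)

open Finset

theorem sum_choose_mul_neg_one_pow_mul_sub_eq_fwdDiff_iter {R : Type*} [CommRing R]
    (f : R → R) (m : ℕ) (x : R) :
    ∑ ℓ ∈ range (m + 1), (m.choose ℓ : R) * (-1) ^ ℓ * f (x - ℓ)
      = (-1) ^ m * (fwdDiff (-1))^[m] f x := by
  rw [fwdDiff_iter_eq_sum_shift, mul_sum]
  refine sum_congr rfl fun ℓ hℓ => ?_
  obtain ⟨k, rfl⟩ := Nat.exists_eq_add_of_le (Nat.lt_succ_iff.mp (mem_range.mp hℓ))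
  have hsign : (-1 : R) ^ (ℓ + k) * (-1) ^ k = (-1) ^ ℓ := by
    rw [pow_add, mul_assoc, ← pow_add, Even.neg_one_pow ⟨k, rfl⟩, mul_one]
  simp only [Nat.add_sub_cancel_left, zsmul_eq_mul, nsmul_eq_mul, Int.cast_mul, Int.cast_pow,
    Int.cast_neg, Int.cast_one, Int.cast_natCast, ← sub_eq_add_neg, mul_neg_one]
  rw [← hsign]
  ring

theorem betaFn_sub_one_sub_betaFn {x y : ℝ} (hx : x ≠ 1) (hy : y ≠ 0) (hxy : x + y ≠ 1) :
    betaFn (x - 1) y - betaFn x y = betaFn (x - 1) (y + 1) := by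
  have hGx : Gamma x = (x - 1) * Gamma (x - 1) := by
    simpa using Gamma_add_one (sub_ne_zero.mpr hx)
  have hGxy : Gamma (x + y) = (x + y - 1) * Gamma (x + y - 1) := by
    simpa using Gamma_add_one (sub_ne_zero.mpr hxy)
  have hxy' : x + y - 1 ≠ 0 := sub_ne_zero.mpr hxy
  unfold betaFn
  rw [show x - 1 + (y + 1) = x + y by ring, sub_add_eq_add_sub, hGx, hGxy, Gamma_add_one hy]
  -- Mathlib's `Γ` is `0` at its poles, where both sides vanish.
  by_cases h : Gamma (x + y - 1) = 0
  · simp [h]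
  field_simp
  ring

theorem fwdDiff_neg_one_iter_betaFn {y : ℝ} (hy : 0 < y) (n : ℕ) {x : ℝ} (hx : n < x) :
    (fwdDiff (-1))^[n] (betaFn · y) x = betaFn (x - n) (y + n) := by
  induction n generalizing x with
  | zero => simp
  | succ n ih =>
    push_cast at hx
    rw [Function.iterate_succ_apply', fwdDiff, ← sub_eq_add_neg, ih (by linarith),
      ih (by linarith), sub_right_comm, Nat.cast_succ, ← sub_sub, ← add_assoc]
    exact betaFn_sub_one_sub_betaFn (by linarith) (by positivity) (by linarith)

theorem betaFn_sub_add_div_betaFn (x y a : ℝ) (h : Gamma (x + y) ≠ 0) :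
    betaFn (x - a) (y + a) / betaFn x y
      = Gamma (x - a) / Gamma x * (Gamma (y + a) / Gamma y) := by
  unfold betaFn
  rw [show x - a + (y + a) = x + y by ring]
  field_simp

theorem Gamma_nat_add_half_div_Gamma_one_half (m : ℕ) :
    Gamma (m + 1 / 2) / Gamma (1 / 2) = (2 * m).factorial / (2 ^ (2 * m) * m.factorial) := by
  have h := Gamma_mul_Gamma_add_half (m + 1 / 2)
  rw [show (m : ℝ) + 1 / 2 + 1 / 2 = m + 1 by ring,
    show 2 * ((m : ℝ) + 1 / 2) = (2 * m : ℕ) + 1 by push_cast; ring,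
    show (1 : ℝ) - ((2 * m : ℕ) + 1) = -(2 * m : ℕ) by push_cast; ring,
    Gamma_nat_eq_factorial, Gamma_nat_eq_factorial, rpow_neg zero_le_two, rpow_natCast] at h
  rw [Gamma_one_half_eq, eq_div_iff (by positivity), div_mul_eq_mul_div,
    div_eq_iff (by positivity), ← mul_assoc, mul_right_comm, h]
  field_simp

theorem beta_alternating_sum_general (s : ℝ) (m : ℕ) (hs : (m : ℝ) < s) :
    1 / betaFn s (1 / 2) *
        ∑ ℓ ∈ Finset.range (m + 1),
          (m.choose ℓ : ℝ) * (-1) ^ ℓ * betaFn (s - ℓ) (1 / 2)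
      = (-1) ^ m * (Real.Gamma (s - m) / Real.Gamma s) *
          (Nat.factorial (2 * m) : ℝ) / ((2 : ℝ) ^ (2 * m) * (Nat.factorial m : ℝ)) := by
  have hs0 : 0 < s := (Nat.cast_nonneg m).trans_lt hs
  have hratio := betaFn_sub_add_div_betaFn s (1 / 2) m (Gamma_pos_of_pos (by positivity)).ne'
  rw [add_comm _ (m : ℝ), Gamma_nat_add_half_div_Gamma_one_half] at hratio
  rw [sum_choose_mul_neg_one_pow_mul_sub_eq_fwdDiff_iter (betaFn · (1 / 2)),
    fwdDiff_neg_one_iter_betaFn one_half_pos m hs, mul_left_comm, one_div_mul_eq_div,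
    add_comm _ (m : ℝ), hratio]
  ring

/-- for a real `s` and a positive integer `m` with `s > m`,
`(1/B(s,1/2))·Σ_{ℓ=0}^{m} C(m,ℓ)·(−1)^ℓ·B(s−ℓ,1/2)
  = (−1)^m·(Γ(s−m)/Γ(s))·(2m)!/(2^{2m}·m!)`. -/
theorem beta_alternating_sum (s : ℝ) (m : ℕ) (hm : 0 < m) (hs : (m : ℝ) < s) :
    1 / betaFn s (1 / 2) *
        ∑ ℓ ∈ Finset.range (m + 1),
          (m.choose ℓ : ℝ) * (-1) ^ ℓ * betaFn (s - ℓ) (1 / 2)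
      = (-1) ^ m * (Real.Gamma (s - m) / Real.Gamma s) *
          (Nat.factorial (2 * m) : ℝ) / ((2 : ℝ) ^ (2 * m) * (Nat.factorial m : ℝ)) :=
  beta_alternating_sum_general s m hs
end

section
/- Let s > 0. Then for every ξ ∈ ℝ, the unitary Fourier transform of ψ_s satisfies (1/√(2π)) · ∫_ℝ e^{−i·ξ·y}·ψ_s(y) dy = (√2·Γ(s+1/2)/Γ(s)) · (1+ξ²)^{−(1+2s)/2}. -/
/-!
Substituting `u = (|y|/2)·eᵗ` in the integral defining `K_s` gives the subordination formula
`ψ_s(y) = Γ(s)⁻¹ ∫₀^∞ e^{-u} u^{s-1} e^{-y²/(4u)} du`, so `ψ_s` is a Gamma mixture of Gaussians.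
The Fourier transform of `e^{-y²/(4u)}` is `√(4πu)·e^{-ξ²u}`, hence by Fubini the transform of
`ψ_s` is `2√π Γ(s)⁻¹ ∫₀^∞ u^{s-1/2} e^{-(1+ξ²)u} du = 2√π Γ(s+1/2)/Γ(s) · (1+ξ²)^{-(s+1/2)}`.
-/

open MeasureTheory Real Filter Set

section ChangeOfVariables

variable {E : Type*} [NormedAddCommGroup E] [NormedSpace ℝ E]

theorem image_const_mul_exp {c : ℝ} (hc : 0 < c) : (fun t ↦ c * exp t) '' univ = Ioi 0 := by
  ext u
  refine ⟨?_, fun hu ↦ ⟨log (u / c), trivial, ?_⟩⟩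
  · rintro ⟨t, -, rfl⟩
    exact mul_pos hc (exp_pos t)
  · simp only [exp_log (div_pos hu hc), mul_div_cancel₀ _ hc.ne']

theorem integrable_comp_const_mul_exp_iff {c : ℝ} (hc : 0 < c) (g : ℝ → E) :
    Integrable (fun t ↦ (c * exp t) • g (c * exp t)) ↔ IntegrableOn g (Ioi 0) := by
  rw [← image_const_mul_exp hc, ← integrableOn_univ]
  simpa [abs_of_pos (mul_pos hc (exp_pos _))] using
    (integrableOn_image_iff_integrableOn_abs_deriv_smul MeasurableSet.univ
      (fun t _ ↦ ((hasDerivAt_exp t).const_mul c).hasDerivWithinAt)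
      (fun a _ b _ h ↦ exp_injective (mul_left_cancel₀ hc.ne' h)) g).symm

theorem integral_comp_const_mul_exp {c : ℝ} (hc : 0 < c) (g : ℝ → E) :
    ∫ t, (c * exp t) • g (c * exp t) = ∫ u in Ioi 0, g u := by
  rw [← image_const_mul_exp hc]
  simpa [abs_of_pos (mul_pos hc (exp_pos _))] using
    (integral_image_eq_integral_abs_deriv_smul MeasurableSet.univ
      (fun t _ ↦ ((hasDerivAt_exp t).const_mul c).hasDerivWithinAt)
      (fun a _ b _ h ↦ exp_injective (mul_left_cancel₀ hc.ne' h)) g).symm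

theorem integral_eq_integral_Ioi_add_comp_neg {f : ℝ → E} (hf : Integrable f) :
    ∫ t, f t = ∫ t in Ioi 0, (f t + f (-t)) := by
  rw [integral_add hf.integrableOn hf.comp_neg.integrableOn, integral_comp_neg_Ioi, neg_zero,
    add_comm, intervalIntegral.integral_Iic_add_Ioi hf.integrableOn hf.integrableOn]

end ChangeOfVariables

noncomputable def gammaGaussianKernel (s y u : ℝ) : ℝ :=
  exp (-u) * u ^ (s - 1) * exp (-(4 * u)⁻¹ * y ^ 2)

section GammaGaussianKernel

variable {s y u : ℝ}

theorem gammaGaussianKernel_nonneg (hu : 0 < u) : 0 ≤ gammaGaussianKernel s y u := by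
  unfold gammaGaussianKernel
  have := rpow_nonneg hu.le (s - 1)
  positivity

theorem integrableOn_gammaGaussianKernel (hs : 0 < s) (y : ℝ) :
    IntegrableOn (gammaGaussianKernel s y) (Ioi 0) := by
  refine (GammaIntegral_convergent hs).mono' (by unfold gammaGaussianKernel; fun_prop) ?_
  filter_upwards [ae_restrict_mem measurableSet_Ioi] with u (hu : 0 < u)
  rw [norm_of_nonneg (gammaGaussianKernel_nonneg hu), gammaGaussianKernel]
  have hgauss : exp (-(4 * u)⁻¹ * y ^ 2) ≤ 1 := exp_le_one_iff.mpr <| by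
    have : 0 ≤ (4 * u)⁻¹ * y ^ 2 := by positivity
    linarith
  exact mul_le_of_le_one_right (by have := rpow_nonneg hu.le (s - 1); positivity) hgauss

/-- The substitution `u = (y/2)·eᵗ` turns `u + y²/(4u)` into `y·cosh t`. -/
theorem mul_exp_smul_gammaGaussianKernel (hy : 0 < y) (s t : ℝ) :
    (y / 2 * exp t) • gammaGaussianKernel s y (y / 2 * exp t)
      = (y / 2) ^ s * (exp (s * t) * exp (-(y * cosh t))) := by
  have hc : 0 < y / 2 := by positivity
  have hpow : (y / 2 * exp t) ^ (s - 1) = (y / 2) ^ (s - 1) * exp ((s - 1) * t) := by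
    rw [mul_rpow hc.le (exp_pos t).le, ← exp_mul, mul_comm t]
  have hc_pow : y / 2 * (y / 2) ^ (s - 1) = (y / 2) ^ s := by
    conv_rhs => rw [show s = 1 + (s - 1) by ring, rpow_add hc, rpow_one]
  have hexp : exp (-(y / 2 * exp t)) * exp (-(4 * (y / 2 * exp t))⁻¹ * y ^ 2) * exp t
        * exp ((s - 1) * t) = exp (s * t) * exp (-(y * cosh t)) := by
    have hrecip : (4 * (y / 2 * exp t))⁻¹ * y ^ 2 = y / 2 * exp (-t) := by
      rw [exp_neg]
      field_simp
      ring
    simp only [← exp_add]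
    rw [neg_mul, hrecip, cosh_eq]
    congr 1
    ring
  rw [smul_eq_mul, gammaGaussianKernel, hpow, ← hc_pow, ← hexp]
  ring

theorem integrable_exp_mul_mul_exp_neg_mul_cosh (hs : 0 < s) (hy : 0 < y) :
    Integrable fun t ↦ exp (s * t) * exp (-(y * cosh t)) := by
  have h := (integrable_comp_const_mul_exp_iff (by positivity : 0 < y / 2) _).mpr
    (integrableOn_gammaGaussianKernel hs y)
  simp_rw [mul_exp_smul_gammaGaussianKernel hy] at h
  exact (integrable_const_mul_iff (rpow_pos_of_pos (by positivity) s).ne'.isUnit _).mp h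

theorem integral_exp_mul_mul_exp_neg_mul_cosh (hs : 0 < s) (hy : 0 < y) :
    ∫ t, exp (s * t) * exp (-(y * cosh t)) = 2 * besselK s y := by
  rw [integral_eq_integral_Ioi_add_comp_neg (integrable_exp_mul_mul_exp_neg_mul_cosh hs hy),
    besselK, ← integral_const_mul]
  refine setIntegral_congr_fun measurableSet_Ioi fun t _ ↦ ?_
  rw [mul_neg, cosh_neg, cosh_eq (s * t)]
  ring

theorem integral_Ioi_gammaGaussianKernel (hs : 0 < s) (hy : 0 < y) :
    ∫ u in Ioi 0, gammaGaussianKernel s y u = 2 ^ (1 - s) * y ^ s * besselK s y := by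
  rw [← integral_comp_const_mul_exp (by positivity : 0 < y / 2)]
  simp_rw [mul_exp_smul_gammaGaussianKernel hy]
  rw [integral_const_mul, integral_exp_mul_mul_exp_neg_mul_cosh hs hy,
    div_rpow hy.le zero_le_two, rpow_sub zero_lt_two, rpow_one]
  field_simp

theorem psi_eq_integral_gammaGaussianKernel (hs : 0 < s) (y : ℝ) :
    psi s y = (Gamma s)⁻¹ * ∫ u in Ioi 0, gammaGaussianKernel s y u := by
  have hΓ := (Gamma_pos_of_pos hs).ne'
  rcases eq_or_ne y 0 with rfl | hy
  · have hkernel (u : ℝ) : gammaGaussianKernel s 0 u = exp (-u) * u ^ (s - 1) := by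
      simp [gammaGaussianKernel]
    simp_rw [psi, if_pos, hkernel, ← Gamma_eq_integral hs, inv_mul_cancel₀ hΓ]
  · have hkernel : gammaGaussianKernel s y = gammaGaussianKernel s |y| := by
      funext u
      simp only [gammaGaussianKernel, sq_abs]
    rw [psi, if_neg hy, hkernel, integral_Ioi_gammaGaussianKernel hs (abs_pos.mpr hy)]
    ring

end GammaGaussianKernel

section Fourier

open scoped Complex

variable {s u : ℝ}

theorem four_pi_mul_rpow_half_mul_rpow_sub_one (hu : 0 < u) (s : ℝ) :
    (4 * π * u) ^ (1 / 2 : ℝ) * u ^ (s - 1) = 2 * √π * u ^ (s + 1 / 2 - 1) := by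
  rw [← sqrt_eq_rpow, sqrt_mul' _ hu.le, sqrt_mul' _ pi_pos.le,
    show (4 : ℝ) = 2 ^ 2 by norm_num, sqrt_sq zero_le_two, sqrt_eq_rpow u,
    show s + 1 / 2 - 1 = 1 / 2 + (s - 1) by ring, rpow_add hu]
  ring

theorem fourierIntegral_gammaGaussianKernel (hu : 0 < u) (s ξ : ℝ) :
    ∫ y : ℝ, cexp (-(Complex.I * ξ * y)) * (gammaGaussianKernel s y u : ℂ)
      = ((2 * √π * (u ^ (s + 1 / 2 - 1) * exp (-((1 + ξ ^ 2) * u))) : ℝ) : ℂ) := by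
  have hb : 0 < (((4 * u)⁻¹ : ℝ) : ℂ).re := by rw [Complex.ofReal_re]; positivity
  have hintegrand (y : ℝ) : cexp (-(Complex.I * ξ * y)) * (gammaGaussianKernel s y u : ℂ)
      = ((exp (-u) * u ^ (s - 1) : ℝ) : ℂ)
        * (cexp (Complex.I * ((-ξ : ℝ) : ℂ) * y) * cexp (-(((4 * u)⁻¹ : ℝ) : ℂ) * y ^ 2)) := by
    simp only [gammaGaussianKernel, Complex.ofReal_mul, Complex.ofReal_exp, Complex.ofReal_neg,
      Complex.ofReal_pow]
    ring_nf
  have hpi : (π : ℂ) / (((4 * u)⁻¹ : ℝ) : ℂ) = ((4 * π * u : ℝ) : ℂ) := by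
    push_cast
    field_simp
  have hexponent :
      -((-ξ : ℝ) : ℂ) ^ 2 / (4 * (((4 * u)⁻¹ : ℝ) : ℂ)) = ((-(ξ ^ 2 * u) : ℝ) : ℂ) := by
    push_cast
    field_simp
  simp_rw [hintegrand]
  rw [integral_const_mul, fourierIntegral_gaussian hb, hpi, hexponent, ← Complex.ofReal_exp,
    show (1 / 2 : ℂ) = ((1 / 2 : ℝ) : ℂ) by norm_num, ← Complex.ofReal_cpow (by positivity),
    ← Complex.ofReal_mul, ← Complex.ofReal_mul, Complex.ofReal_inj,
    ← mul_assoc (2 * √π), ← four_pi_mul_rpow_half_mul_rpow_sub_one hu, add_mul, one_mul, neg_add,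
    exp_add]
  ring

theorem integral_gammaGaussianKernel (hu : 0 < u) (s : ℝ) :
    ∫ y, gammaGaussianKernel s y u = 2 * √π * (u ^ (s + 1 / 2 - 1) * exp (-u)) := by
  have h := fourierIntegral_gammaGaussianKernel hu s 0
  simp only [Complex.ofReal_zero, mul_zero, zero_mul, neg_zero, Complex.exp_zero, one_mul,
    ne_eq, OfNat.ofNat_ne_zero, not_false_eq_true, zero_pow, add_zero] at h
  exact Complex.ofReal_injective (integral_complex_ofReal.symm.trans h)

theorem integrable_gammaGaussianKernel (hu : 0 < u) (s : ℝ) :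
    Integrable fun y ↦ gammaGaussianKernel s y u :=
  (integrable_exp_neg_mul_sq (by positivity)).const_mul _

theorem integrable_prod_fourier_gammaGaussianKernel (hs : 0 < s) (ξ : ℝ) :
    Integrable
      (Function.uncurry fun (y u : ℝ) ↦
        cexp (-(Complex.I * ξ * y)) * (gammaGaussianKernel s y u : ℂ))
      (volume.prod (volume.restrict (Ioi 0))) := by
  have hphase (y : ℝ) : ‖cexp (-(Complex.I * ξ * y))‖ = 1 := by
    rw [Complex.norm_exp]
    simp
  refine (integrable_prod_iff' (by unfold gammaGaussianKernel; fun_prop)).mpr ⟨?_, ?_⟩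
  · filter_upwards [ae_restrict_mem measurableSet_Ioi] with u (hu : 0 < u)
    exact (integrable_gammaGaussianKernel hu s).ofReal.bdd_mul (by fun_prop)
      (ae_of_all _ fun y ↦ (hphase y).le)
  · refine ((GammaIntegral_convergent (by linarith : 0 < s + 1 / 2)).const_mul (2 * √π)).congr ?_
    filter_upwards [ae_restrict_mem measurableSet_Ioi] with u (hu : 0 < u)
    simp only [Function.uncurry_apply_pair, norm_mul, hphase, one_mul, Complex.norm_real,
      norm_of_nonneg (gammaGaussianKernel_nonneg hu), integral_gammaGaussianKernel hu]
    ring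

theorem fourierIntegral_psi_eq_integral_Ioi (hs : 0 < s) (ξ : ℝ) :
    ∫ y : ℝ, cexp (-(Complex.I * ξ * y)) * (psi s y : ℂ)
      = ((Gamma s)⁻¹ : ℂ) * ∫ u in Ioi 0, ∫ y : ℝ,
          cexp (-(Complex.I * ξ * y)) * (gammaGaussianKernel s y u : ℂ) := by
  rw [← integral_integral_swap (integrable_prod_fourier_gammaGaussianKernel hs ξ),
    ← integral_const_mul]
  congr 1 with y
  rw [psi_eq_integral_gammaGaussianKernel hs, integral_const_mul, integral_complex_ofReal,
    Complex.ofReal_mul, Complex.ofReal_inv]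
  ring

end Fourier

/-- for `s > 0` the unitary Fourier transform of `ψ_s` equals
`(√2·Γ(s+1/2)/Γ(s))·(1+ξ²)^{−(1+2s)/2}`. -/
theorem psi_fourier_transform (s : ℝ) (hs : 0 < s) (ξ : ℝ) :
    (1 / (Real.sqrt (2 * Real.pi)) : ℂ) *
        ∫ y : ℝ, Complex.exp (-(Complex.I * ξ * y)) * (psi s y : ℂ)
      = ((Real.sqrt 2 * Real.Gamma (s + 1 / 2) / Real.Gamma s) *
          (1 + ξ ^ 2) ^ (-((1 + 2 * s) / 2)) : ℝ) := by
  have hξ : 0 < 1 + ξ ^ 2 := by positivity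
  rw [fourierIntegral_psi_eq_integral_Ioi hs,
    setIntegral_congr_fun measurableSet_Ioi fun u hu ↦ fourierIntegral_gammaGaussianKernel hu s ξ,
    integral_complex_ofReal, integral_const_mul,
    integral_rpow_mul_exp_neg_mul_Ioi (by linarith) hξ, one_div, ← Complex.ofReal_inv,
    ← Complex.ofReal_inv, ← Complex.ofReal_mul, ← Complex.ofReal_mul, Complex.ofReal_inj]
  have hdecay : (1 / (1 + ξ ^ 2)) ^ (s + 1 / 2) = (1 + ξ ^ 2) ^ (-((1 + 2 * s) / 2)) := by
    rw [one_div, inv_rpow hξ.le, ← rpow_neg hξ.le]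
    congr 1
    ring
  have hΓ := (Gamma_pos_of_pos hs).ne'
  rw [hdecay, sqrt_mul zero_le_two]
  field_simp
  rw [sq_sqrt zero_le_two]
end
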